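/- Let F have characteristic 2 and A = A(V,*,φ) a Vidinli algebra of dimension at least 3. Then the nucleus N(A) equals the center Z(A), and moreover either Z(A) = F·1 or A is commutative (equivalently, φ is symmetric). -/

import Mathlib

/-- The multiplication of the unital algebra `A(V,*,φ)` on `F ⊕ V`:
`(α1+u)(β1+v) = (αβ + φ(u,v))·1 + (αv + βu + u*v)`. -/
def amul {F V : Type*} [Field F] [AddCommGroup V] [Module F V]
    (φ : V →ₗ[F] V →ₗ[F] F) (m : V →ₗ[F] V →ₗ[F] V) (x y : F × V) : F × V :=
  (x.1 * y.1 + φ x.2 y.2, x.1 • y.2 + y.1 • x.2 + m x.2 y.2)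

/-- The associator of `A(V,*,φ)`. -/
def aassoc {F V : Type*} [Field F] [AddCommGroup V] [Module F V]
    (φ : V →ₗ[F] V →ₗ[F] F) (m : V →ₗ[F] V →ₗ[F] V) (x y z : F × V) : F × V :=
  amul φ m (amul φ m x y) z - amul φ m x (amul φ m y z)

/-!
Alternativity of `*` together with characteristic `2` makes `*` symmetric, and then the
associator only sees the vector parts: `(x,y,z)` has vector part
`φ(x,y) z - φ(y,z) x + (x*y)*z - x*(y*z)`. The associator `(v,x,v)` for a nuclear `x = α + u`
gives `(φ(v,u) - φ(u,v)) v = 0`, so nuclear elements commute with everything. If moreover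
`u ≠ 0`, the combination `(u,v,w) - (u,w,v) - (v,u,w)` collapses to
`(φ(w,v) - φ(v,w)) u = 0`, so `φ` is symmetric and `A` is commutative.
-/

theorem LinearMap.IsAlt.apply_comm_of_two_eq_zero {R M N : Type*} [CommRing R]
    [AddCommGroup M] [AddCommGroup N] [Module R M] [Module R N] {B : M →ₗ[R] M →ₗ[R] N}
    (hB : B.IsAlt) (h2 : (2 : R) = 0) (u v : M) : B u v = B v u := by
  have hself : B v u + B v u = 0 := by rw [← two_smul R, h2, zero_smul]
  rw [← hB.neg, neg_eq_of_add_eq_zero_left hself]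

namespace Vidinli

variable {F V : Type*} [Field F] [AddCommGroup V] [Module F V]
  {φ : V →ₗ[F] V →ₗ[F] F} {m : V →ₗ[F] V →ₗ[F] V}

variable (φ m) in
def nucleus : Set (F × V) :=
  {x | ∀ y z, aassoc φ m x y z = 0 ∧ aassoc φ m y x z = 0 ∧ aassoc φ m y z x = 0}

variable (φ m) in
def center : Set (F × V) :=
  {x | x ∈ nucleus φ m ∧ ∀ y, amul φ m x y = amul φ m y x}

theorem aassoc_eq (x y z : F × V) :
    aassoc φ m x y z =
      (φ (m x.2 y.2) z.2 - φ x.2 (m y.2 z.2),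
        φ x.2 y.2 • z.2 - φ y.2 z.2 • x.2 + m (m x.2 y.2) z.2 - m x.2 (m y.2 z.2)) := by
  obtain ⟨a, u⟩ := x
  obtain ⟨b, v⟩ := y
  obtain ⟨c, w⟩ := z
  simp only [aassoc, amul, Prod.mk_sub_mk, Prod.mk.injEq, map_add, map_smul,
    LinearMap.add_apply, LinearMap.smul_apply, smul_eq_mul]
  constructor
  · ring
  · module

theorem aassoc_snd_eq_zero {x y z : F × V} (h : aassoc φ m x y z = 0) :
    φ x.2 y.2 • z.2 - φ y.2 z.2 • x.2 + m (m x.2 y.2) z.2 - m x.2 (m y.2 z.2) = 0 := by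
  simpa only [aassoc_eq, Prod.snd_zero] using congrArg Prod.snd h

section SymmetricProduct

variable (hms : ∀ u v, m u v = m v u)
include hms

theorem amul_comm_iff (x y : F × V) :
    amul φ m x y = amul φ m y x ↔ φ x.2 y.2 = φ y.2 x.2 := by
  simp only [amul, Prod.mk.injEq, hms x.2 y.2, mul_comm x.1, add_right_inj]
  exact ⟨And.left, fun h => ⟨h, by abel⟩⟩

theorem forall_amul_comm_iff :
    (∀ x y : F × V, amul φ m x y = amul φ m y x) ↔ ∀ u v : V, φ u v = φ v u :=
  ⟨fun h u v => (amul_comm_iff hms (0, u) (0, v)).1 (h _ _),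
    fun h x y => (amul_comm_iff hms x y).2 (h _ _)⟩

theorem apply_comm_of_mem_nucleus {x : F × V} (hx : x ∈ nucleus φ m) (v : V) :
    φ x.2 v = φ v x.2 := by
  have h := aassoc_snd_eq_zero (hx (0, v) (0, v)).2.1
  rw [hms v x.2, hms (m x.2 v) v, add_sub_cancel_right, ← sub_smul] at h
  rcases smul_eq_zero.1 h with h | rfl
  · exact (sub_eq_zero.1 h).symm
  · simp

theorem nucleus_eq_center : nucleus φ m = center φ m :=
  Set.Subset.antisymm
    (fun x hx => ⟨hx, fun y => (amul_comm_iff hms x y).2 (apply_comm_of_mem_nucleus hms hx y.2)⟩)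
    fun _ hx => hx.1

theorem symm_of_mem_nucleus {x : F × V} (hx : x ∈ nucleus φ m) (hx0 : x.2 ≠ 0) (v w : V) :
    φ v w = φ w v := by
  have e₁ := aassoc_snd_eq_zero (hx (0, v) (0, w)).1
  have e₂ := aassoc_snd_eq_zero (hx (0, w) (0, v)).1
  have e₃ := aassoc_snd_eq_zero (hx (0, v) (0, w)).2.1
  simp only at e₁ e₂ e₃
  rw [hms w v] at e₂
  rw [← apply_comm_of_mem_nucleus hms hx v, hms v x.2, hms v (m x.2 w)] at e₃
  have key : (φ w v - φ v w) • x.2 = 0 := by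
    linear_combination (norm := module) e₁ - e₂ - e₃
  rcases smul_eq_zero.1 key with h | h
  · exact (sub_eq_zero.1 h).symm
  · exact absurd h hx0

end SymmetricProduct

theorem mk_zero_mem_center (α : F) : ((α, 0) : F × V) ∈ center φ m := by
  refine ⟨fun y z => ?_, fun y => ?_⟩
  · simp [aassoc_eq]
  · simp [amul, mul_comm]

theorem center_eq_range_or_comm (hms : ∀ u v, m u v = m v u) :
    center φ m = Set.range (fun α : F => ((α, 0) : F × V)) ∨
      ∀ x y : F × V, amul φ m x y = amul φ m y x := by
  by_cases h : ∃ x ∈ center φ m, x.2 ≠ 0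
  · obtain ⟨x, hx, hx0⟩ := h
    exact Or.inr ((forall_amul_comm_iff hms).2 (symm_of_mem_nucleus hms hx.1 hx0))
  · push Not at h
    refine Or.inl (Set.Subset.antisymm (fun x hx => ⟨x.1, Prod.ext rfl (h x hx).symm⟩) ?_)
    rintro _ ⟨α, rfl⟩
    exact mk_zero_mem_center α

end Vidinli

open Vidinli in
theorem stmt19_general {F V : Type*} [Field F] [AddCommGroup V] [Module F V]
    (hchar : (2 : F) = 0)
    (m : V →ₗ[F] V →ₗ[F] V) (hm : ∀ u : V, m u u = 0)
    (φ : V →ₗ[F] V →ₗ[F] F) :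
    ({x : F × V | ∀ y z : F × V,
        aassoc φ m x y z = 0 ∧ aassoc φ m y x z = 0 ∧ aassoc φ m y z x = 0}
      = {x : F × V | (∀ y z : F × V,
          aassoc φ m x y z = 0 ∧ aassoc φ m y x z = 0 ∧ aassoc φ m y z x = 0) ∧
          ∀ y : F × V, amul φ m x y = amul φ m y x}) ∧
    ({x : F × V | (∀ y z : F × V,
        aassoc φ m x y z = 0 ∧ aassoc φ m y x z = 0 ∧ aassoc φ m y z x = 0) ∧
        ∀ y : F × V, amul φ m x y = amul φ m y x}
        = Set.range (fun α : F => ((α, 0) : F × V)) ∨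
      ∀ x y : F × V, amul φ m x y = amul φ m y x) ∧
    ((∀ x y : F × V, amul φ m x y = amul φ m y x) ↔ ∀ u v : V, φ u v = φ v u) := by
  have hms : ∀ u v, m u v = m v u := LinearMap.IsAlt.apply_comm_of_two_eq_zero hm hchar
  exact ⟨nucleus_eq_center hms, center_eq_range_or_comm hms, forall_amul_comm_iff hms⟩

/-- For a Vidinli algebra `A = A(V,*,φ)` of dimension at least `3` over a field
of characteristic `2`, the nucleus equals the center, and either the center is
`F·1` or `A` is commutative (equivalently, `φ` is symmetric). -/
theorem stmt19 {F V : Type*} [Field F] [AddCommGroup V] [Module F V]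
    (hchar : (2 : F) = 0)
    (m : V →ₗ[F] V →ₗ[F] V) (hm : ∀ u : V, m u u = 0)
    (φ : V →ₗ[F] V →ₗ[F] F)
    (hdim : 3 ≤ Module.rank F (F × V)) :
    ({x : F × V | ∀ y z : F × V,
        aassoc φ m x y z = 0 ∧ aassoc φ m y x z = 0 ∧ aassoc φ m y z x = 0}
      = {x : F × V | (∀ y z : F × V,
          aassoc φ m x y z = 0 ∧ aassoc φ m y x z = 0 ∧ aassoc φ m y z x = 0) ∧
          ∀ y : F × V, amul φ m x y = amul φ m y x}) ∧
    ({x : F × V | (∀ y z : F × V,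
        aassoc φ m x y z = 0 ∧ aassoc φ m y x z = 0 ∧ aassoc φ m y z x = 0) ∧
        ∀ y : F × V, amul φ m x y = amul φ m y x}
        = Set.range (fun α : F => ((α, 0) : F × V)) ∨
      ∀ x y : F × V, amul φ m x y = amul φ m y x) ∧
    ((∀ x y : F × V, amul φ m x y = amul φ m y x) ↔ ∀ u v : V, φ u v = φ v u) :=
  stmt19_general hchar m hm φ
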